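/- Assume q ≡ 1 (mod 4). Let ℓ be a tangent line to O and let p0 ∈ O be its point of tangency (so ℓ = p0⊥). Let M be any finite set of internal points with |M| odd such that for every external point q on ℓ, the number of points p' ∈ M for which the line through q and p' is passant is odd. Then, with characteristic vectors taken over F_2, χ_{E_ℓ} = Σ_{p ∈ M} χ_{N_{Pa,E}(p)}. -/

import Mathlib

/- Setting: `K` is a finite field of odd order `q`.  Points and lines of
`PG(2,q)` are both represented as points of the projectivization of `K^3`
(homogeneous coordinates), with incidence given by vanishing of the dot
product.  `O` is the conic `X1^2 - X0*X2 = 0`. -/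

open scoped Classical
set_option linter.unusedSectionVars false

noncomputable section

namespace ConicCode

variable (K : Type*) [Field K] [Fintype K]

abbrev Pt := Projectivization K (Fin 3 → K)

instance : Finite (Pt K) := Quotient.finite _

noncomputable instance : Fintype (Pt K) := Fintype.ofFinite _

variable {K}

/-- Dot product of two coordinate triples. -/
def dotV (v w : Fin 3 → K) : K := v 0 * w 0 + v 1 * w 1 + v 2 * w 2

/-- Incidence between a point and a line (both given by projective triples). -/
def Incid (p ℓ : Pt K) : Prop := dotV p.rep ℓ.rep = 0

/-- Membership in the conic `O` defined by `X1^2 - X0*X2`. -/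
def OnConic (p : Pt K) : Prop := p.rep 1 ^ 2 - p.rep 0 * p.rep 2 = 0

/-- A tangent line meets `O` in exactly one point. -/
def Tangent (ℓ : Pt K) : Prop := {p : Pt K | OnConic p ∧ Incid p ℓ}.ncard = 1

/-- A secant line meets `O` in exactly two points. -/
def Secant (ℓ : Pt K) : Prop := {p : Pt K | OnConic p ∧ Incid p ℓ}.ncard = 2

/-- A passant line misses `O`. -/
def Passant (ℓ : Pt K) : Prop := {p : Pt K | OnConic p ∧ Incid p ℓ}.ncard = 0

/-- An external point lies on exactly two tangent lines. -/
def External (p : Pt K) : Prop := {ℓ : Pt K | Tangent ℓ ∧ Incid p ℓ}.ncard = 2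

/-- An internal point lies on no tangent line. -/
def Internal (p : Pt K) : Prop := {ℓ : Pt K | Tangent ℓ ∧ Incid p ℓ}.ncard = 0


/-- Coordinates of the polar line of the point `(a0,a1,a2)`: `[-a2/2, a1, -a0/2]`. -/
def perpVec (v : Fin 3 → K) : Fin 3 → K := ![-(v 2) / 2, v 1, -(v 0) / 2]

/-- The polarity `⊥` induced by the conic `O`.  (In odd characteristic
`perpVec` of a nonzero vector is nonzero, so the `else` branch is never
taken.) -/
def perp (p : Pt K) : Pt K :=
  if h : perpVec p.rep ≠ 0 then Projectivization.mk K _ h else p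

/-- Cross product: coordinates of the line through two distinct points. -/
def crossVec (v w : Fin 3 → K) : Fin 3 → K :=
  ![v 1 * w 2 - v 2 * w 1, v 2 * w 0 - v 0 * w 2, v 0 * w 1 - v 1 * w 0]

/-- The line through two distinct points (junk value if the points coincide). -/
def lineThrough (p q : Pt K) : Pt K :=
  if h : crossVec p.rep q.rep ≠ 0 then Projectivization.mk K _ h else p

/-- The intersection point of two distinct lines (junk value if they coincide). -/
def meetPt (l m : Pt K) : Pt K := lineThrough l m


/-! ### Auxiliary machinery -/

section Aux

variable {K : Type*} [Field K] [Fintype K]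

lemma smul3 (a : K) (v : Fin 3 → K) (i : Fin 3) : (a • v) i = a * v i := rfl

lemma dotV_smul_left (a : K) (v w : Fin 3 → K) : dotV (a • v) w = a * dotV v w := by
  simp only [dotV, smul3]; ring

lemma dotV_smul_right (a : K) (v w : Fin 3 → K) : dotV v (a • w) = a * dotV v w := by
  simp only [dotV, smul3]; ring

/-- Extract a scalar representative equation for `mk`. -/
lemma rep_mk' (v : Fin 3 → K) (hv : v ≠ 0) :
    ∃ a : K, a ≠ 0 ∧ (Projectivization.mk K v hv).rep = a • v := by
  have h := Projectivization.mk_rep (Projectivization.mk K v hv)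
  rw [Projectivization.mk_eq_mk_iff] at h
  obtain ⟨a, ha⟩ := h
  exact ⟨(a : K), a.ne_zero, by rw [← ha]; rfl⟩

lemma mk_smul_eq (v : Fin 3 → K) (hv : v ≠ 0) (a : K) (ha : a ≠ 0)
    (hav : a • v ≠ 0) : Projectivization.mk K (a • v) hav = Projectivization.mk K v hv := by
  rw [Projectivization.mk_eq_mk_iff]
  exact ⟨Units.mk0 a ha, rfl⟩

lemma smul_ne_zero3 {a : K} (ha : a ≠ 0) {v : Fin 3 → K} (hv : v ≠ 0) : a • v ≠ 0 := by
  intro h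
  apply hv
  funext i
  have := congrFun h i
  rw [smul3] at this
  simpa [ha] using this

lemma dotV_crossVec_left (u v : Fin 3 → K) : dotV u (crossVec u v) = 0 := by
  simp only [dotV, crossVec]
  show u 0 * (u 1 * v 2 - u 2 * v 1) + u 1 * (u 2 * v 0 - u 0 * v 2)
      + u 2 * (u 0 * v 1 - u 1 * v 0) = 0
  ring

lemma dotV_crossVec_right (u v : Fin 3 → K) : dotV v (crossVec u v) = 0 := by
  simp only [dotV, crossVec]
  show v 0 * (u 1 * v 2 - u 2 * v 1) + v 1 * (u 2 * v 0 - u 0 * v 2)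
      + v 2 * (u 0 * v 1 - u 1 * v 0) = 0
  ring

lemma crossVec_smul_left (a : K) (u v : Fin 3 → K) :
    crossVec (a • u) v = a • crossVec u v := by
  funext i
  fin_cases i <;>
    · show _ = a * _
      simp only [crossVec, smul3]
      show _ = _
      norm_num [Matrix.cons_val_zero, Matrix.cons_val_one, Matrix.head_cons]
      ring

lemma crossVec_triple {u v w : Fin 3 → K} (h1 : dotV u w = 0) (h2 : dotV v w = 0) :
    crossVec (crossVec u v) w = 0 := by
  simp only [dotV] at h1 h2
  funext i
  fin_cases i
  · show (crossVec u v) 1 * w 2 - (crossVec u v) 2 * w 1 = 0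
    show (u 2 * v 0 - u 0 * v 2) * w 2 - (u 0 * v 1 - u 1 * v 0) * w 1 = 0
    linear_combination v 0 * h1 - u 0 * h2
  · show (crossVec u v) 2 * w 0 - (crossVec u v) 0 * w 2 = 0
    show (u 0 * v 1 - u 1 * v 0) * w 0 - (u 1 * v 2 - u 2 * v 1) * w 2 = 0
    linear_combination v 1 * h1 - u 1 * h2
  · show (crossVec u v) 0 * w 1 - (crossVec u v) 1 * w 0 = 0
    show (u 1 * v 2 - u 2 * v 1) * w 1 - (u 2 * v 0 - u 0 * v 2) * w 0 = 0
    linear_combination v 2 * h1 - u 2 * h2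

lemma mk_eq_mk_of_crossVec_eq_zero {u v : Fin 3 → K} (hu : u ≠ 0) (hv : v ≠ 0)
    (h : crossVec u v = 0) : Projectivization.mk K u hu = Projectivization.mk K v hv := by
  have r0 : u 1 * v 2 - u 2 * v 1 = 0 := congrFun h 0
  have r1 : u 2 * v 0 - u 0 * v 2 = 0 := congrFun h 1
  have r2 : u 0 * v 1 - u 1 * v 0 = 0 := congrFun h 2
  have key : ∃ c : K, u = c • v := by
    by_cases h0 : v 0 ≠ 0
    · refine ⟨u 0 / v 0, funext fun j => ?_⟩
      fin_cases j
      · show u 0 = u 0 / v 0 * v 0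
        field_simp
      · show u 1 = u 0 / v 0 * v 1
        rw [div_mul_eq_mul_div, eq_div_iff h0]
        linear_combination -r2
      · show u 2 = u 0 / v 0 * v 2
        rw [div_mul_eq_mul_div, eq_div_iff h0]
        linear_combination r1
    · push_neg at h0
      by_cases h1 : v 1 ≠ 0
      · refine ⟨u 1 / v 1, funext fun j => ?_⟩
        fin_cases j
        · show u 0 = u 1 / v 1 * v 0
          rw [div_mul_eq_mul_div, eq_div_iff h1]
          linear_combination r2
        · show u 1 = u 1 / v 1 * v 1
          field_simp
        · show u 2 = u 1 / v 1 * v 2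
          rw [div_mul_eq_mul_div, eq_div_iff h1]
          linear_combination -r0
      · push_neg at h1
        have h2 : v 2 ≠ 0 := by
          intro h2
          apply hv
          funext j
          fin_cases j <;> assumption
        refine ⟨u 2 / v 2, funext fun j => ?_⟩
        fin_cases j
        · show u 0 = u 2 / v 2 * v 0
          rw [div_mul_eq_mul_div, eq_div_iff h2]
          linear_combination -r1
        · show u 1 = u 2 / v 2 * v 1
          rw [div_mul_eq_mul_div, eq_div_iff h2]
          linear_combination r0
        · show u 2 = u 2 / v 2 * v 2
          field_simp
  obtain ⟨c, hc⟩ := key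
  have hc0 : c ≠ 0 := by
    intro h0
    apply hu
    rw [hc, h0]
    funext j
    simp [smul3]
  rw [Projectivization.mk_eq_mk_iff]
  exact ⟨Units.mk0 c hc0, hc.symm⟩

lemma crossVec_ne_zero_of_ne {p q : Pt K} (h : p ≠ q) : crossVec p.rep q.rep ≠ 0 := by
  intro hc
  exact h (by
    rw [← Projectivization.mk_rep p, ← Projectivization.mk_rep q]
    exact mk_eq_mk_of_crossVec_eq_zero _ _ hc)

lemma lineThrough_eq {p q : Pt K} (h : p ≠ q) :
    lineThrough p q = Projectivization.mk K (crossVec p.rep q.rep) (crossVec_ne_zero_of_ne h) := by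
  rw [lineThrough, dif_pos (crossVec_ne_zero_of_ne h)]

lemma incid_lineThrough_left {p q : Pt K} (h : p ≠ q) : Incid p (lineThrough p q) := by
  rw [lineThrough_eq h]
  obtain ⟨a, ha, hrep⟩ := rep_mk' (crossVec p.rep q.rep) (crossVec_ne_zero_of_ne h)
  show dotV _ _ = 0
  rw [hrep, dotV_smul_right, dotV_crossVec_left]
  ring

lemma incid_lineThrough_right {p q : Pt K} (h : p ≠ q) : Incid q (lineThrough p q) := by
  rw [lineThrough_eq h]
  obtain ⟨a, ha, hrep⟩ := rep_mk' (crossVec p.rep q.rep) (crossVec_ne_zero_of_ne h)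
  show dotV _ _ = 0
  rw [hrep, dotV_smul_right, dotV_crossVec_right]
  ring

lemma eq_lineThrough_of_incid {p q m : Pt K} (hpq : p ≠ q)
    (hp : Incid p m) (hq : Incid q m) : m = lineThrough p q := by
  rw [lineThrough_eq hpq]
  have h3 : crossVec (crossVec p.rep q.rep) m.rep = 0 := crossVec_triple hp hq
  rw [← Projectivization.mk_rep m]
  exact (mk_eq_mk_of_crossVec_eq_zero (crossVec_ne_zero_of_ne hpq) m.rep_nonzero h3).symm

end Aux


/-! ### Quadratic form, discriminants, conic parametrization -/

section Conic

variable {K : Type*} [Field K] [Fintype K]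

/-- The quadratic form of the conic. -/
def Qf (v : Fin 3 → K) : K := v 1 ^ 2 - v 0 * v 2

/-- Discriminant of the line with coefficient vector `w`. -/
def discL (w : Fin 3 → K) : K := w 1 ^ 2 - 4 * w 0 * w 2

/-- Discriminant of the line joining points with coordinates `u`, `v`. -/
def Fpv (u v : Fin 3 → K) : K :=
  (2 * u 1 * v 1 - u 0 * v 2 - u 2 * v 0) ^ 2
    - 4 * (u 1 ^ 2 - u 0 * u 2) * (v 1 ^ 2 - v 0 * v 2)

lemma Qf_smul (a : K) (v : Fin 3 → K) : Qf (a • v) = a ^ 2 * Qf v := by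
  simp only [Qf, smul3]; ring

lemma discL_smul (a : K) (w : Fin 3 → K) : discL (a • w) = a ^ 2 * discL w := by
  simp only [discL, smul3]; ring

lemma Fpv_smul_left (a : K) (u v : Fin 3 → K) : Fpv (a • u) v = a ^ 2 * Fpv u v := by
  simp only [Fpv, smul3]; ring

lemma discL_crossVec (u v : Fin 3 → K) : discL (crossVec u v) = Fpv u v := by
  simp only [discL, Fpv]
  show (u 2 * v 0 - u 0 * v 2) ^ 2 - 4 * (u 1 * v 2 - u 2 * v 1) * (u 0 * v 1 - u 1 * v 0) = _
  ring

lemma onConic_iff_Qf (p : Pt K) : OnConic p ↔ Qf p.rep = 0 := Iff.rfl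

/-- Affine points of the conic. -/
def cpt (s : K) : Fin 3 → K := ![1, s, s ^ 2]

lemma cpt_ne_zero (s : K) : cpt s ≠ 0 := by
  intro h
  have : (1 : K) = 0 := congrFun h 0
  exact one_ne_zero this

def mkc (s : K) : Pt K := Projectivization.mk K (cpt s) (cpt_ne_zero s)

def infv : Fin 3 → K := ![0, 0, 1]

lemma infv_ne_zero : (infv : Fin 3 → K) ≠ 0 := by
  intro h
  have : (1 : K) = 0 := congrFun h 2
  exact one_ne_zero this

def mkinf : Pt K := Projectivization.mk K infv infv_ne_zero

lemma onConic_mkc (s : K) : OnConic (mkc s) := by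
  obtain ⟨a, ha, hrep⟩ := rep_mk' (cpt s) (cpt_ne_zero s)
  show (mkc s).rep 1 ^ 2 - (mkc s).rep 0 * (mkc s).rep 2 = 0
  rw [show (mkc s).rep = a • cpt s from hrep]
  simp only [smul3]
  show (a * s) ^ 2 - a * 1 * (a * s ^ 2) = 0
  ring

lemma onConic_mkinf : OnConic (mkinf : Pt K) := by
  obtain ⟨a, ha, hrep⟩ := rep_mk' (infv : Fin 3 → K) infv_ne_zero
  show (mkinf : Pt K).rep 1 ^ 2 - (mkinf : Pt K).rep 0 * (mkinf : Pt K).rep 2 = 0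
  rw [show (mkinf : Pt K).rep = a • infv from hrep]
  simp only [smul3]
  show (a * 0) ^ 2 - a * 0 * (a * 1) = 0
  ring

lemma onConic_iff (p : Pt K) : OnConic p ↔ (∃ s, p = mkc s) ∨ p = mkinf := by
  constructor
  · intro h
    have hQ : p.rep 1 ^ 2 - p.rep 0 * p.rep 2 = 0 := h
    by_cases h0 : p.rep 0 = 0
    · right
      have h1 : p.rep 1 = 0 := by
        have hsq : p.rep 1 ^ 2 = 0 := by linear_combination hQ + p.rep 2 * h0
        exact pow_eq_zero_iff (two_ne_zero) |>.mp hsq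
      rw [← Projectivization.mk_rep p]
      apply mk_eq_mk_of_crossVec_eq_zero
      funext i
      fin_cases i
      · show p.rep 1 * 1 - p.rep 2 * 0 = 0
        rw [h1]; ring
      · show p.rep 2 * 0 - p.rep 0 * 1 = 0
        rw [h0]; ring
      · show p.rep 0 * 0 - p.rep 1 * 0 = 0
        ring
    · left
      set s := p.rep 1 / p.rep 0 with hs
      refine ⟨s, ?_⟩
      conv_lhs => rw [← Projectivization.mk_rep p]
      apply mk_eq_mk_of_crossVec_eq_zero
      have hs' : p.rep 0 * s = p.rep 1 := by
        rw [hs]; field_simp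
      funext i
      fin_cases i
      · show p.rep 1 * s ^ 2 - p.rep 2 * s = 0
        have : p.rep 0 * (p.rep 1 * s ^ 2 - p.rep 2 * s) = s * (s * p.rep 0 - p.rep 1) * p.rep 1 + s * (p.rep 1 ^ 2 - p.rep 0 * p.rep 2) := by ring
        have h2 := this
        rw [hQ] at h2
        have h3 : p.rep 0 * (p.rep 1 * s ^ 2 - p.rep 2 * s) = 0 := by
          rw [h2]
          have : s * p.rep 0 - p.rep 1 = 0 := by linear_combination hs'
          rw [this]; ring
        exact (mul_eq_zero.mp h3).resolve_left h0
      · show p.rep 2 * 1 - p.rep 0 * s ^ 2 = 0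
        have h3 : p.rep 0 * (p.rep 2 * 1 - p.rep 0 * s ^ 2) = 0 := by
          have expand : p.rep 0 * (p.rep 2 * 1 - p.rep 0 * s ^ 2) = -(p.rep 1 ^ 2 - p.rep 0 * p.rep 2) - (p.rep 0 * s - p.rep 1) * (p.rep 0 * s + p.rep 1) := by ring
          rw [expand, hQ]
          have : p.rep 0 * s - p.rep 1 = 0 := by linear_combination hs'
          rw [this]; ring
        exact (mul_eq_zero.mp h3).resolve_left h0
      · show p.rep 0 * s - p.rep 1 * 1 = 0
        linear_combination hs'
  · rintro (⟨s, rfl⟩ | rfl)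
    · exact onConic_mkc s
    · exact onConic_mkinf

lemma mkc_injective : Function.Injective (mkc : K → Pt K) := by
  intro s s' h
  rw [mkc, mkc, Projectivization.mk_eq_mk_iff] at h
  obtain ⟨a, ha⟩ := h
  have h0 : (a : K) * 1 = 1 := congrFun ha 0
  have h1 : (a : K) * s' = s := congrFun ha 1
  rw [mul_one] at h0
  rw [h0, one_mul] at h1
  exact h1.symm

lemma mkc_ne_mkinf (s : K) : mkc s ≠ mkinf := by
  intro h
  rw [mkc, mkinf, Projectivization.mk_eq_mk_iff] at h
  obtain ⟨a, ha⟩ := h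
  have h0 : (a : K) * 0 = 1 := congrFun ha 0
  rw [mul_zero] at h0
  exact zero_ne_one h0

lemma incid_mkc_iff (s : K) (m : Pt K) :
    Incid (mkc s) m ↔ m.rep 2 * s ^ 2 + m.rep 1 * s + m.rep 0 = 0 := by
  obtain ⟨a, ha, hrep⟩ := rep_mk' (cpt s) (cpt_ne_zero s)
  show dotV (mkc s).rep m.rep = 0 ↔ _
  rw [show (mkc s).rep = a • cpt s from hrep, dotV_smul_left]
  have : dotV (cpt s) m.rep = m.rep 2 * s ^ 2 + m.rep 1 * s + m.rep 0 := by
    show 1 * m.rep 0 + s * m.rep 1 + s ^ 2 * m.rep 2 = _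
    ring
  rw [this]
  constructor
  · intro h
    rcases mul_eq_zero.mp h with h | h
    · exact absurd h ha
    · exact h
  · intro h
    rw [h, mul_zero]

lemma incid_mkinf_iff (m : Pt K) : Incid (mkinf : Pt K) m ↔ m.rep 2 = 0 := by
  obtain ⟨a, ha, hrep⟩ := rep_mk' (infv : Fin 3 → K) infv_ne_zero
  show dotV (mkinf : Pt K).rep m.rep = 0 ↔ _
  rw [show (mkinf : Pt K).rep = a • infv from hrep, dotV_smul_left]
  have : dotV (infv : Fin 3 → K) m.rep = m.rep 2 := by
    show 0 * m.rep 0 + 0 * m.rep 1 + 1 * m.rep 2 = _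
    ring
  rw [this]
  constructor
  · intro h
    rcases mul_eq_zero.mp h with h | h
    · exact absurd h ha
    · exact h
  · intro h
    rw [h, mul_zero]

end Conic


/-! ### Counting points defined by a quadratic equation in a pencil -/

section Pencil

variable {K : Type*} [Field K] [Fintype K]

lemma pencil_ncard_of_not_isSquare {f : K → Pt K} {z : Pt K} {a b c : K} {S : Set (Pt K)}
    (hS : ∀ p, p ∈ S ↔ (∃ s, p = f s ∧ a * s ^ 2 + b * s + c = 0) ∨ (p = z ∧ a = 0))
    (hns : ¬ IsSquare (b ^ 2 - 4 * a * c)) : S.ncard = 0 := by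
  have hempty : S = ∅ := by
    ext p
    simp only [Set.mem_empty_iff_false, iff_false]
    intro hp
    rcases (hS p).mp hp with ⟨s, _, hroot⟩ | ⟨_, ha⟩
    · exact hns ⟨2 * a * s + b, by linear_combination (-4 * a) * hroot⟩
    · exact hns ⟨b, by rw [ha]; ring⟩
  rw [hempty, Set.ncard_empty]

lemma pencil_ncard_of_disc_eq_zero (h2 : (2 : K) ≠ 0) {f : K → Pt K} {z : Pt K} {a b c : K}
    {S : Set (Pt K)} (hz : ∀ s, f s ≠ z)
    (hne : ¬(a = 0 ∧ b = 0 ∧ c = 0))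
    (hS : ∀ p, p ∈ S ↔ (∃ s, p = f s ∧ a * s ^ 2 + b * s + c = 0) ∨ (p = z ∧ a = 0))
    (hd : b ^ 2 - 4 * a * c = 0) : S.ncard = 1 := by
  by_cases ha : a = 0
  · have hb : b = 0 := by
      have : b ^ 2 = 0 := by linear_combination hd + 4 * c * ha
      exact pow_eq_zero_iff two_ne_zero |>.mp this
    have hc : c ≠ 0 := fun hc => hne ⟨ha, hb, hc⟩
    have : S = {z} := by
      ext p
      rw [hS p, Set.mem_singleton_iff]
      constructor
      · rintro (⟨s, _, hroot⟩ | ⟨hpz, _⟩)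
        · exact absurd (by linear_combination hroot - s ^ 2 * ha - s * hb) hc
        · exact hpz
      · intro hpz
        exact Or.inr ⟨hpz, ha⟩
    rw [this, Set.ncard_singleton]
  · have h2a : (2 : K) * a ≠ 0 := mul_ne_zero h2 ha
    have : S = {f (-b / (2 * a))} := by
      ext p
      rw [hS p, Set.mem_singleton_iff]
      constructor
      · rintro (⟨s, rfl, hroot⟩ | ⟨_, ha'⟩)
        · congr 1
          have hsq : (2 * a * s + b) ^ 2 = 0 := by
            linear_combination 4 * a * hroot + hd
          have hlin : 2 * a * s + b = 0 := pow_eq_zero_iff two_ne_zero |>.mp hsq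
          rw [eq_div_iff h2a]
          linear_combination hlin
        · exact absurd ha' ha
      · rintro rfl
        refine Or.inl ⟨-b / (2 * a), rfl, ?_⟩
        have h4a : (4 : K) * a ≠ 0 := by
          refine mul_ne_zero ?_ ha
          rw [show (4 : K) = 2 * 2 by norm_num]
          exact mul_ne_zero h2 h2
        have hs : -b / (2 * a) * (2 * a) = -b := div_mul_cancel₀ (-b) h2a
        have h4 : (4 * a) * (a * (-b / (2 * a)) ^ 2 + b * (-b / (2 * a)) + c) = 0 := by
          linear_combination (2 * a * (-b / (2 * a)) + b) * hs - hd
        exact (mul_eq_zero.mp h4).resolve_left h4a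
    rw [this, Set.ncard_singleton]

lemma pencil_ncard_of_isSquare (h2 : (2 : K) ≠ 0) {f : K → Pt K} {z : Pt K} {a b c : K}
    {S : Set (Pt K)} (hfinj : Function.Injective f) (hz : ∀ s, f s ≠ z)
    (hS : ∀ p, p ∈ S ↔ (∃ s, p = f s ∧ a * s ^ 2 + b * s + c = 0) ∨ (p = z ∧ a = 0))
    (hd : b ^ 2 - 4 * a * c ≠ 0) (hsq : IsSquare (b ^ 2 - 4 * a * c)) : S.ncard = 2 := by
  obtain ⟨r, hr⟩ := hsq
  have hrne : r ≠ 0 := by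
    intro h0
    rw [h0, mul_zero] at hr
    exact hd hr
  by_cases ha : a = 0
  · have hb : b ≠ 0 := by
      intro hb
      apply hd
      rw [ha, hb]; ring
    have : S = {f (-c / b), z} := by
      ext p
      rw [hS p, Set.mem_insert_iff, Set.mem_singleton_iff]
      constructor
      · rintro (⟨s, rfl, hroot⟩ | ⟨hpz, _⟩)
        · left
          congr 1
          rw [eq_div_iff hb]
          linear_combination hroot - s ^ 2 * ha
        · right; exact hpz
      · rintro (rfl | rfl)
        · refine Or.inl ⟨-c / b, rfl, ?_⟩
          have hs : -c / b * b = -c := div_mul_cancel₀ (-c) hb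
          linear_combination (-c / b) ^ 2 * ha + hs
        · exact Or.inr ⟨rfl, ha⟩
    rw [this, Set.ncard_pair (hz _)]
  · have h2a : (2 : K) * a ≠ 0 := mul_ne_zero h2 ha
    have key : ∀ s : K, a * s ^ 2 + b * s + c = 0 ↔
        s = (-b + r) / (2 * a) ∨ s = (-b - r) / (2 * a) := by
      intro s
      constructor
      · intro hroot
        have hfac : (2 * a * s + b - r) * (2 * a * s + b + r) = 0 := by
          linear_combination 4 * a * hroot + hr
        rcases mul_eq_zero.mp hfac with h | h
        · left
          rw [eq_div_iff h2a]
          linear_combination h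
        · right
          rw [eq_div_iff h2a]
          linear_combination h
      · have h4a : (4 : K) * a ≠ 0 := by
          refine mul_ne_zero ?_ ha
          rw [show (4 : K) = 2 * 2 by norm_num]
          exact mul_ne_zero h2 h2
        rintro (rfl | rfl)
        · have hs : (-b + r) / (2 * a) * (2 * a) = -b + r := div_mul_cancel₀ _ h2a
          have h4 : (4 * a) * (a * ((-b + r) / (2 * a)) ^ 2 + b * ((-b + r) / (2 * a)) + c) = 0 := by
            linear_combination (2 * a * ((-b + r) / (2 * a)) + b + r) * hs - hr
          exact (mul_eq_zero.mp h4).resolve_left h4a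
        · have hs : (-b - r) / (2 * a) * (2 * a) = -b - r := div_mul_cancel₀ _ h2a
          have h4 : (4 * a) * (a * ((-b - r) / (2 * a)) ^ 2 + b * ((-b - r) / (2 * a)) + c) = 0 := by
            linear_combination (2 * a * ((-b - r) / (2 * a)) + b - r) * hs - hr
          exact (mul_eq_zero.mp h4).resolve_left h4a
    have hdist : (-b + r) / (2 * a) ≠ (-b - r) / (2 * a) := by
      intro h
      rw [div_eq_div_iff h2a h2a] at h
      have hr0 : (2 : K) * (r * (2 * a)) = 0 := by linear_combination h
      rcases mul_eq_zero.mp hr0 with h' | h'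
      · exact h2 h'
      · rcases mul_eq_zero.mp h' with h'' | h''
        · exact hrne h''
        · exact h2a h''
    have : S = {f ((-b + r) / (2 * a)), f ((-b - r) / (2 * a))} := by
      ext p
      rw [hS p, Set.mem_insert_iff, Set.mem_singleton_iff]
      constructor
      · rintro (⟨s, rfl, hroot⟩ | ⟨_, ha'⟩)
        · rcases (key s).mp hroot with h | h
          · left; rw [h]
          · right; rw [h]
        · exact absurd ha' ha
      · rintro (rfl | rfl)
        · exact Or.inl ⟨_, rfl, (key _).mpr (Or.inl rfl)⟩
        · exact Or.inl ⟨_, rfl, (key _).mpr (Or.inr rfl)⟩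
    rw [this, Set.ncard_pair (fun h => hdist (hfinj h))]

end Pencil


/-! ### Dictionary: line types and point types via discriminants -/

section Dictionary

variable {K : Type*} [Field K] [Fintype K]

lemma isSquare_sq_mul_iff {a : K} (ha : a ≠ 0) (x : K) :
    IsSquare (a ^ 2 * x) ↔ IsSquare x := by
  constructor
  · rintro ⟨y, hy⟩
    refine ⟨y / a, ?_⟩
    field_simp
    linear_combination hy
  · rintro ⟨y, hy⟩
    exact ⟨a * y, by rw [hy]; ring⟩

lemma line_pencil_char (m : Pt K) (p : Pt K) :
    (OnConic p ∧ Incid p m) ↔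
      ((∃ s, p = mkc s ∧ m.rep 2 * s ^ 2 + m.rep 1 * s + m.rep 0 = 0)
        ∨ (p = mkinf ∧ m.rep 2 = 0)) := by
  constructor
  · rintro ⟨hc, hi⟩
    rcases (onConic_iff p).mp hc with ⟨s, rfl⟩ | rfl
    · exact Or.inl ⟨s, rfl, (incid_mkc_iff s m).mp hi⟩
    · exact Or.inr ⟨rfl, (incid_mkinf_iff m).mp hi⟩
  · rintro (⟨s, rfl, h⟩ | ⟨rfl, h⟩)
    · exact ⟨onConic_mkc s, (incid_mkc_iff s m).mpr h⟩
    · exact ⟨onConic_mkinf, (incid_mkinf_iff m).mpr h⟩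

lemma rep_not_all_zero (m : Pt K) : ¬(m.rep 2 = 0 ∧ m.rep 1 = 0 ∧ m.rep 0 = 0) := by
  rintro ⟨h2', h1', h0'⟩
  apply m.rep_nonzero
  funext i
  fin_cases i <;> assumption

lemma discL_eq (m : Pt K) : m.rep 1 ^ 2 - 4 * m.rep 2 * m.rep 0 = discL m.rep := by
  rw [discL]; ring

lemma passant_iff_not_isSquare (h2 : (2 : K) ≠ 0) (m : Pt K) :
    Passant m ↔ ¬ IsSquare (discL m.rep) := by
  constructor
  · intro hp hsq
    have hp' : {p : Pt K | OnConic p ∧ Incid p m}.ncard = 0 := hp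
    by_cases hd : discL m.rep = 0
    · have h1 := pencil_ncard_of_disc_eq_zero h2 mkc_ne_mkinf (rep_not_all_zero m)
        (line_pencil_char m) ((discL_eq m).trans hd)
      have : (0 : ℕ) = 1 := hp'.symm.trans h1
      exact zero_ne_one this
    · have h1 := pencil_ncard_of_isSquare h2 mkc_injective mkc_ne_mkinf
        (line_pencil_char m) (fun h => hd ((discL_eq m).symm.trans h))
        (by rwa [discL_eq m])
      have : (0 : ℕ) = 2 := hp'.symm.trans h1
      norm_num at this
  · intro hns
    have h0 := pencil_ncard_of_not_isSquare (line_pencil_char m) (by rwa [discL_eq m])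
    exact h0

lemma tangent_iff_discL_eq_zero (h2 : (2 : K) ≠ 0) (m : Pt K) :
    Tangent m ↔ discL m.rep = 0 := by
  constructor
  · intro ht
    have ht' : {p : Pt K | OnConic p ∧ Incid p m}.ncard = 1 := ht
    by_contra hd
    by_cases hsq : IsSquare (discL m.rep)
    · have h1 := pencil_ncard_of_isSquare h2 mkc_injective mkc_ne_mkinf
        (line_pencil_char m) (fun h => hd ((discL_eq m).symm.trans h)) (by rwa [discL_eq m])
      have : (1 : ℕ) = 2 := ht'.symm.trans h1
      norm_num at this
    · have h1 := pencil_ncard_of_not_isSquare (line_pencil_char m) (by rwa [discL_eq m])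
      have : (1 : ℕ) = 0 := ht'.symm.trans h1
      norm_num at this
  · intro hd
    exact pencil_ncard_of_disc_eq_zero h2 mkc_ne_mkinf (rep_not_all_zero m)
      (line_pencil_char m) ((discL_eq m).trans hd)

/-- Tangent line coefficient vectors. -/
def tlv (s : K) : Fin 3 → K := ![s ^ 2, -2 * s, 1]

lemma tlv_ne_zero (s : K) : tlv s ≠ 0 := by
  intro h
  have : (1 : K) = 0 := congrFun h 2
  exact one_ne_zero this

def mkt (s : K) : Pt K := Projectivization.mk K (tlv s) (tlv_ne_zero s)

def tinfv : Fin 3 → K := ![1, 0, 0]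

lemma tinfv_ne_zero : (tinfv : Fin 3 → K) ≠ 0 := by
  intro h
  have : (1 : K) = 0 := congrFun h 0
  exact one_ne_zero this

def mktinf : Pt K := Projectivization.mk K tinfv tinfv_ne_zero

lemma mkt_injective (h2 : (2 : K) ≠ 0) : Function.Injective (mkt : K → Pt K) := by
  intro s s' h
  rw [mkt, mkt, Projectivization.mk_eq_mk_iff] at h
  obtain ⟨a, ha⟩ := h
  have hc2 : (a : K) * 1 = 1 := congrFun ha 2
  have hc1 : (a : K) * (-2 * s') = -2 * s := congrFun ha 1
  rw [mul_one] at hc2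
  rw [hc2, one_mul] at hc1
  have : (2 : K) * (s' - s) = 0 := by linear_combination -hc1
  rcases mul_eq_zero.mp this with h' | h'
  · exact absurd h' h2
  · linear_combination -h'

lemma mkt_ne_mktinf (s : K) : mkt s ≠ mktinf := by
  intro h
  rw [mkt, mktinf, Projectivization.mk_eq_mk_iff] at h
  obtain ⟨a, ha⟩ := h
  have hc2 : (a : K) * 0 = 1 := congrFun ha 2
  rw [mul_zero] at hc2
  exact zero_ne_one hc2

lemma incid_mkt_iff (s : K) (p : Pt K) :
    Incid p (mkt s) ↔ p.rep 0 * s ^ 2 + (-2 * p.rep 1) * s + p.rep 2 = 0 := by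
  obtain ⟨a, ha, hrep⟩ := rep_mk' (tlv s) (tlv_ne_zero s)
  show dotV p.rep (mkt s).rep = 0 ↔ _
  rw [show (mkt s).rep = a • tlv s from hrep, dotV_smul_right]
  have : dotV p.rep (tlv s) = p.rep 0 * s ^ 2 + (-2 * p.rep 1) * s + p.rep 2 := by
    show p.rep 0 * s ^ 2 + p.rep 1 * (-2 * s) + p.rep 2 * 1 = _
    ring
  rw [this]
  constructor
  · intro h
    exact (mul_eq_zero.mp h).resolve_left ha
  · intro h
    rw [h, mul_zero]

lemma incid_mktinf_iff (p : Pt K) : Incid p (mktinf : Pt K) ↔ p.rep 0 = 0 := by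
  obtain ⟨a, ha, hrep⟩ := rep_mk' (tinfv : Fin 3 → K) tinfv_ne_zero
  show dotV p.rep (mktinf : Pt K).rep = 0 ↔ _
  rw [show (mktinf : Pt K).rep = a • tinfv from hrep, dotV_smul_right]
  have : dotV p.rep (tinfv : Fin 3 → K) = p.rep 0 := by
    show p.rep 0 * 1 + p.rep 1 * 0 + p.rep 2 * 0 = _
    ring
  rw [this]
  constructor
  · intro h
    exact (mul_eq_zero.mp h).resolve_left ha
  · intro h
    rw [h, mul_zero]

lemma tangent_classification (h2 : (2 : K) ≠ 0) (m : Pt K) :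
    Tangent m ↔ ((∃ s, m = mkt s) ∨ m = mktinf) := by
  rw [tangent_iff_discL_eq_zero h2]
  constructor
  · intro hd
    have hd' : m.rep 1 ^ 2 - 4 * m.rep 0 * m.rep 2 = 0 := hd
    by_cases hw2 : m.rep 2 = 0
    · right
      have hw1 : m.rep 1 = 0 := by
        have : m.rep 1 ^ 2 = 0 := by linear_combination hd' + 4 * m.rep 0 * hw2
        exact pow_eq_zero_iff two_ne_zero |>.mp this
      rw [mktinf, ← Projectivization.mk_rep m]
      apply mk_eq_mk_of_crossVec_eq_zero
      funext i
      fin_cases i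
      · show m.rep 1 * 0 - m.rep 2 * 0 = 0
        ring
      · show m.rep 2 * 1 - m.rep 0 * 0 = 0
        rw [hw2]; ring
      · show m.rep 0 * 0 - m.rep 1 * 1 = 0
        rw [hw1]; ring
    · left
      have h2w : (2 : K) * m.rep 2 ≠ 0 := mul_ne_zero h2 hw2
      obtain ⟨s, hs'⟩ : ∃ s : K, s * (2 * m.rep 2) = -m.rep 1 :=
        ⟨-m.rep 1 / (2 * m.rep 2), div_mul_cancel₀ _ h2w⟩
      refine ⟨s, ?_⟩
      rw [mkt, ← Projectivization.mk_rep m]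
      apply mk_eq_mk_of_crossVec_eq_zero
      have h4w : (4 : K) * m.rep 2 ≠ 0 := by
        refine mul_ne_zero ?_ hw2
        rw [show (4 : K) = 2 * 2 by norm_num]
        exact mul_ne_zero h2 h2
      have h4w2 : (4 : K) * m.rep 2 ^ 2 ≠ 0 := by
        refine mul_ne_zero ?_ (pow_ne_zero 2 hw2)
        rw [show (4 : K) = 2 * 2 by norm_num]
        exact mul_ne_zero h2 h2
      funext i
      fin_cases i
      · show m.rep 1 * 1 - m.rep 2 * (-2 * s) = 0
        linear_combination hs'
      · show m.rep 2 * s ^ 2 - m.rep 0 * 1 = 0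
        have hz : (4 * m.rep 2) * (m.rep 2 * s ^ 2 - m.rep 0 * 1) = 0 := by
          linear_combination (s * (2 * m.rep 2) - m.rep 1) * hs' + hd'
        exact (mul_eq_zero.mp hz).resolve_left h4w
      · show m.rep 0 * (-2 * s) - m.rep 1 * s ^ 2 = 0
        have hz : (4 * m.rep 2 ^ 2) * (m.rep 0 * (-2 * s) - m.rep 1 * s ^ 2) = 0 := by
          linear_combination (-4 * m.rep 0 * m.rep 2 - m.rep 1 * (s * (2 * m.rep 2)) + m.rep 1 ^ 2) * hs'
            + (-m.rep 1) * hd'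
        exact (mul_eq_zero.mp hz).resolve_left h4w2
  · rintro (⟨s, rfl⟩ | rfl)
    · obtain ⟨a, ha, hrep⟩ := rep_mk' (tlv s) (tlv_ne_zero s)
      show discL (mkt s).rep = 0
      rw [show (mkt s).rep = a • tlv s from hrep, discL_smul]
      have : discL (tlv s) = 0 := by
        show (-2 * s) ^ 2 - 4 * s ^ 2 * 1 = 0
        ring
      rw [this, mul_zero]
    · obtain ⟨a, ha, hrep⟩ := rep_mk' (tinfv : Fin 3 → K) tinfv_ne_zero
      show discL (mktinf : Pt K).rep = 0
      rw [show (mktinf : Pt K).rep = a • tinfv from hrep, discL_smul]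
      have : discL (tinfv : Fin 3 → K) = 0 := by
        show (0 : K) ^ 2 - 4 * 1 * 0 = 0
        ring
      rw [this, mul_zero]

lemma tangent_pencil_char (h2 : (2 : K) ≠ 0) (p : Pt K) (m : Pt K) :
    (Tangent m ∧ Incid p m) ↔
      ((∃ s, m = mkt s ∧ p.rep 0 * s ^ 2 + (-2 * p.rep 1) * s + p.rep 2 = 0)
        ∨ (m = mktinf ∧ p.rep 0 = 0)) := by
  constructor
  · rintro ⟨ht, hi⟩
    rcases (tangent_classification h2 m).mp ht with ⟨s, rfl⟩ | rfl
    · exact Or.inl ⟨s, rfl, (incid_mkt_iff s p).mp hi⟩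
    · exact Or.inr ⟨rfl, (incid_mktinf_iff p).mp hi⟩
  · rintro (⟨s, rfl, h⟩ | ⟨rfl, h⟩)
    · exact ⟨(tangent_classification h2 _).mpr (Or.inl ⟨s, rfl⟩), (incid_mkt_iff s p).mpr h⟩
    · exact ⟨(tangent_classification h2 _).mpr (Or.inr rfl), (incid_mktinf_iff p).mpr h⟩

lemma tangent_disc_eq (p : Pt K) :
    (-2 * p.rep 1) ^ 2 - 4 * p.rep 0 * p.rep 2 = 2 ^ 2 * Qf p.rep := by
  rw [Qf]; ring

lemma external_iff (h2 : (2 : K) ≠ 0) (p : Pt K) :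
    External p ↔ (IsSquare (Qf p.rep) ∧ Qf p.rep ≠ 0) := by
  have hQ4 : IsSquare ((-2 * p.rep 1) ^ 2 - 4 * p.rep 0 * p.rep 2) ↔ IsSquare (Qf p.rep) := by
    rw [tangent_disc_eq p]
    exact isSquare_sq_mul_iff h2 _
  have hQ0 : ((-2 * p.rep 1) ^ 2 - 4 * p.rep 0 * p.rep 2) = 0 ↔ Qf p.rep = 0 := by
    rw [tangent_disc_eq p]
    constructor
    · intro h
      rcases mul_eq_zero.mp h with h' | h'
      · exact absurd h' (pow_ne_zero 2 h2)
      · exact h'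
    · intro h
      rw [h, mul_zero]
  constructor
  · intro he
    rw [External] at he
    by_cases hd : (-2 * p.rep 1) ^ 2 - 4 * p.rep 0 * p.rep 2 = 0
    · have := pencil_ncard_of_disc_eq_zero h2 mkt_ne_mktinf
        (fun ⟨h0, h1, h2'⟩ => p.rep_nonzero (by
          funext i
          fin_cases i
          · exact h0
          · have : (2:K) * p.rep 1 = 0 := by linear_combination -h1
            exact (mul_eq_zero.mp this).resolve_left h2
          · exact h2'))
        (tangent_pencil_char h2 p) hd
      have h21 : (2 : ℕ) = 1 := (he : {ℓ : Pt K | Tangent ℓ ∧ Incid p ℓ}.ncard = 2).symm.trans this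
      norm_num at h21
    · by_cases hsq : IsSquare ((-2 * p.rep 1) ^ 2 - 4 * p.rep 0 * p.rep 2)
      · exact ⟨hQ4.mp hsq, fun h => hd (hQ0.mpr h)⟩
      · have := pencil_ncard_of_not_isSquare (tangent_pencil_char h2 p) hsq
        have h20 : (2 : ℕ) = 0 := (he : {ℓ : Pt K | Tangent ℓ ∧ Incid p ℓ}.ncard = 2).symm.trans this
        norm_num at h20
  · rintro ⟨hsq, hne⟩
    rw [External]
    exact pencil_ncard_of_isSquare h2 (mkt_injective h2) mkt_ne_mktinf
      (tangent_pencil_char h2 p) (fun h => hne (hQ0.mp h)) (hQ4.mpr hsq)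

lemma internal_iff (h2 : (2 : K) ≠ 0) (p : Pt K) :
    Internal p ↔ ¬ IsSquare (Qf p.rep) := by
  have hQ4 : IsSquare ((-2 * p.rep 1) ^ 2 - 4 * p.rep 0 * p.rep 2) ↔ IsSquare (Qf p.rep) := by
    rw [tangent_disc_eq p]
    exact isSquare_sq_mul_iff h2 _
  constructor
  · intro hi hsq
    rw [Internal] at hi
    by_cases hd : (-2 * p.rep 1) ^ 2 - 4 * p.rep 0 * p.rep 2 = 0
    · have := pencil_ncard_of_disc_eq_zero h2 mkt_ne_mktinf
        (fun ⟨h0, h1, h2'⟩ => p.rep_nonzero (by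
          funext i
          fin_cases i
          · exact h0
          · have : (2:K) * p.rep 1 = 0 := by linear_combination -h1
            exact (mul_eq_zero.mp this).resolve_left h2
          · exact h2'))
        (tangent_pencil_char h2 p) hd
      have h01 : (0 : ℕ) = 1 := (hi : {ℓ : Pt K | Tangent ℓ ∧ Incid p ℓ}.ncard = 0).symm.trans this
      exact zero_ne_one h01
    · have := pencil_ncard_of_isSquare h2 (mkt_injective h2) mkt_ne_mktinf
        (tangent_pencil_char h2 p) hd (hQ4.mpr hsq)
      have h02 : (0 : ℕ) = 2 := (hi : {ℓ : Pt K | Tangent ℓ ∧ Incid p ℓ}.ncard = 0).symm.trans this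
      norm_num at h02
  · intro hns
    rw [Internal]
    exact pencil_ncard_of_not_isSquare (tangent_pencil_char h2 p) (fun h => hns (hQ4.mp h))

lemma internal_not_incid_tangent {x m : Pt K} (hx : Internal x) (ht : Tangent m)
    (hi : Incid x m) : False := by
  rw [Internal] at hx
  have : m ∈ {ℓ : Pt K | Tangent ℓ ∧ Incid x ℓ} := ⟨ht, hi⟩
  rw [Set.ncard_eq_zero (Set.toFinite _)] at hx
  rw [hx] at this
  exact this

end Dictionary


/-! ### Bridge lemmas -/

section Bridge

variable {K : Type*} [Field K] [Fintype K]

lemma passant_lineThrough_iff (h2 : (2 : K) ≠ 0) {p x : Pt K} (hne : p ≠ x) :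
    Passant (lineThrough p x) ↔ ¬ IsSquare (Fpv p.rep x.rep) := by
  rw [passant_iff_not_isSquare h2, lineThrough_eq hne]
  obtain ⟨b, hb, hrep⟩ := rep_mk' (crossVec p.rep x.rep) (crossVec_ne_zero_of_ne hne)
  rw [hrep, discL_smul, discL_crossVec, isSquare_sq_mul_iff hb]

lemma Fpv_rep_mk (u : Fin 3 → K) (hu : u ≠ 0) (x : Pt K) :
    ∃ a : K, a ≠ 0 ∧ Fpv (Projectivization.mk K u hu).rep x.rep = a ^ 2 * Fpv u x.rep := by
  obtain ⟨a, ha, hrep⟩ := rep_mk' u hu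
  exact ⟨a, ha, by rw [hrep, Fpv_smul_left]⟩

lemma Qf_rep_mk (u : Fin 3 → K) (hu : u ≠ 0) :
    ∃ a : K, a ≠ 0 ∧ Qf (Projectivization.mk K u hu).rep = a ^ 2 * Qf u := by
  obtain ⟨a, ha, hrep⟩ := rep_mk' u hu
  exact ⟨a, ha, by rw [hrep, Qf_smul]⟩

lemma external_mk_iff (h2 : (2 : K) ≠ 0) (u : Fin 3 → K) (hu : u ≠ 0) :
    External (Projectivization.mk K u hu) ↔ (IsSquare (Qf u) ∧ Qf u ≠ 0) := by
  rw [external_iff h2]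
  obtain ⟨a, ha, hQ⟩ := Qf_rep_mk u hu
  rw [hQ, isSquare_sq_mul_iff ha]
  constructor
  · rintro ⟨hs, hn⟩
    exact ⟨hs, fun h => hn (by rw [h, mul_zero])⟩
  · rintro ⟨hs, hn⟩
    exact ⟨hs, fun h => hn ((mul_eq_zero.mp h).resolve_left (pow_ne_zero 2 ha))⟩

lemma Fpv_ne_zero_of_internal (h2 : (2 : K) ≠ 0) {x w : Pt K} (hx : Internal x) (hne : w ≠ x) :
    Fpv w.rep x.rep ≠ 0 := by
  intro h0
  have hd : discL ((lineThrough w x).rep) = 0 := by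
    rw [lineThrough_eq hne]
    obtain ⟨b, hb, hrep⟩ := rep_mk' (crossVec w.rep x.rep) (crossVec_ne_zero_of_ne hne)
    rw [hrep, discL_smul, discL_crossVec, h0, mul_zero]
  exact internal_not_incid_tangent hx ((tangent_iff_discL_eq_zero h2 _).mpr hd)
    (incid_lineThrough_right hne)

lemma exists_passant_iff {x e : Pt K} (hne : e ≠ x) :
    (∃ l', Passant l' ∧ Incid x l' ∧ Incid e l') ↔ Passant (lineThrough e x) := by
  constructor
  · rintro ⟨l', hp, hx', he'⟩
    rwa [eq_lineThrough_of_incid hne he' hx'] at hp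
  · intro hp
    exact ⟨_, hp, incid_lineThrough_right hne, incid_lineThrough_left hne⟩

lemma perpVec_smul (a : K) (v : Fin 3 → K) : perpVec (a • v) = a • perpVec v := by
  funext i
  fin_cases i
  · show -((a • v) 2) / 2 = a * (-(v 2) / 2)
    rw [smul3]
    ring
  · show (a • v) 1 = a * v 1
    rw [smul3]
  · show -((a • v) 0) / 2 = a * (-(v 0) / 2)
    rw [smul3]
    ring

lemma perpVec_ne_zero (h2 : (2 : K) ≠ 0) {v : Fin 3 → K} (hv : v ≠ 0) : perpVec v ≠ 0 := by
  intro h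
  apply hv
  have h0 : -(v 2) / 2 = 0 := congrFun h 0
  have h1 : v 1 = 0 := congrFun h 1
  have h2' : -(v 0) / 2 = 0 := congrFun h 2
  have hv2 : v 2 = 0 := by
    rcases div_eq_zero_iff.mp h0 with h' | h'
    · exact neg_eq_zero.mp h'
    · exact absurd h' h2
  have hv0 : v 0 = 0 := by
    rcases div_eq_zero_iff.mp h2' with h' | h'
    · exact neg_eq_zero.mp h'
    · exact absurd h' h2
  funext i
  fin_cases i <;> assumption

lemma perp_eq (h2 : (2 : K) ≠ 0) (p : Pt K) :
    perp p = Projectivization.mk K (perpVec p.rep) (perpVec_ne_zero h2 p.rep_nonzero) := by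
  rw [perp, dif_pos (perpVec_ne_zero h2 p.rep_nonzero)]

lemma incid_perp_mk (h2 : (2 : K) ≠ 0) {v : Fin 3 → K} (hv : v ≠ 0) (u : Pt K) :
    Incid u (perp (Projectivization.mk K v hv)) ↔ dotV u.rep (perpVec v) = 0 := by
  rw [perp_eq h2]
  obtain ⟨a, ha, hrep⟩ := rep_mk'
    (perpVec (Projectivization.mk K v hv).rep)
    (perpVec_ne_zero h2 (Projectivization.mk K v hv).rep_nonzero)
  obtain ⟨c, hc, hrepv⟩ := rep_mk' v hv
  show dotV u.rep _ = 0 ↔ _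
  rw [hrep, hrepv, perpVec_smul, smul_smul, dotV_smul_right]
  constructor
  · intro h
    exact (mul_eq_zero.mp h).resolve_left (mul_ne_zero ha hc)
  · intro h
    rw [h, mul_zero]

lemma incid_perp_mkc (h2 : (2 : K) ≠ 0) (t : K) (u : Pt K) :
    Incid u (perp (mkc t)) ↔ t ^ 2 * u.rep 0 - 2 * t * u.rep 1 + u.rep 2 = 0 := by
  rw [mkc, incid_perp_mk h2]
  have hinv : (2 : K) * 2⁻¹ = 1 := mul_inv_cancel₀ h2
  have hdot : dotV u.rep (perpVec (cpt t)) =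
      u.rep 0 * (-(t ^ 2) / 2) + u.rep 1 * t + u.rep 2 * (-1 / 2) := by
    show u.rep 0 * (-((cpt t) 2) / 2) + u.rep 1 * ((cpt t) 1) + u.rep 2 * (-((cpt t) 0) / 2) = _
    show u.rep 0 * (-(t ^ 2) / 2) + u.rep 1 * t + u.rep 2 * (-(1:K) / 2) = _
    ring
  rw [hdot]
  constructor
  · intro h
    have hkey : t ^ 2 * u.rep 0 - 2 * t * u.rep 1 + u.rep 2 =
        (-2) * (u.rep 0 * (-(t ^ 2) / 2) + u.rep 1 * t + u.rep 2 * (-1 / 2)) := by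
      linear_combination (-(t ^ 2 * u.rep 0) - u.rep 2) * hinv
    rw [hkey, h, mul_zero]
  · intro h
    have hkey : (-2 : K) * (u.rep 0 * (-(t ^ 2) / 2) + u.rep 1 * t + u.rep 2 * (-1 / 2)) =
        t ^ 2 * u.rep 0 - 2 * t * u.rep 1 + u.rep 2 := by
      linear_combination (t ^ 2 * u.rep 0 + u.rep 2) * hinv
    have : (-2 : K) * (u.rep 0 * (-(t ^ 2) / 2) + u.rep 1 * t + u.rep 2 * (-1 / 2)) = 0 := by
      rw [hkey, h]
    rcases mul_eq_zero.mp this with h' | h'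
    · exfalso
      apply h2
      linear_combination -h'
    · exact h'

lemma incid_perp_mkinf (h2 : (2 : K) ≠ 0) (u : Pt K) :
    Incid u (perp (mkinf : Pt K)) ↔ u.rep 0 = 0 := by
  rw [mkinf, incid_perp_mk h2]
  have hdot : dotV u.rep (perpVec (infv : Fin 3 → K)) = u.rep 0 * (-1 / 2) := by
    show u.rep 0 * (-((infv : Fin 3 → K) 2) / 2) + u.rep 1 * ((infv : Fin 3 → K) 1)
        + u.rep 2 * (-((infv : Fin 3 → K) 0) / 2) = _
    show u.rep 0 * (-(1:K) / 2) + u.rep 1 * 0 + u.rep 2 * (-(0:K) / 2) = _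
    ring
  rw [hdot]
  constructor
  · intro h
    rcases mul_eq_zero.mp h with h' | h'
    · exact h'
    · exfalso
      rcases div_eq_zero_iff.mp h' with h'' | h''
      · norm_num at h''
      · exact h2 h''
  · intro h
    rw [h, zero_mul]

lemma ne_of_external_internal {e x : Pt K} (he : External e) (hx : Internal x) : e ≠ x := by
  intro h
  rw [External] at he
  rw [Internal] at hx
  rw [h] at he
  rw [he] at hx
  norm_num at hx

end Bridge


/-! ### The key algebraic identities -/

section Master

variable {K : Type*} [Field K] [Fintype K]

/-- Scalar form of `Fpv`. -/
def Fsc (a b c d e f : K) : K :=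
  (2 * b * e - a * f - c * d) ^ 2 - 4 * (b ^ 2 - a * c) * (e ^ 2 - d * f)

lemma Fpv_vec (a b c : K) (v : Fin 3 → K) :
    Fpv ![a, b, c] v = Fsc a b c (v 0) (v 1) (v 2) := rfl

lemma Qf_vec (a b c : K) : Qf (![a, b, c] : Fin 3 → K) = b ^ 2 - a * c := rfl

lemma isSquare_mul_iff {a b : K} (ha : a ≠ 0) (hb : b ≠ 0) :
    IsSquare (a * b) ↔ (IsSquare a ↔ IsSquare b) := by
  rw [← quadraticChar_one_iff_isSquare (mul_ne_zero ha hb),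
      ← quadraticChar_one_iff_isSquare ha, ← quadraticChar_one_iff_isSquare hb, map_mul]
  rcases quadraticChar_dichotomy ha with h | h <;>
    rcases quadraticChar_dichotomy hb with h' | h' <;>
      rw [h, h'] <;> norm_num

lemma isSquare_triple_iff {A B C g : K} (hA : A ≠ 0) (hB : B ≠ 0) (hC : C ≠ 0)
    (h : A * B * C = g ^ 2) : (IsSquare A ↔ (IsSquare B ↔ IsSquare C)) := by
  have hsq : IsSquare (A * B * C) := ⟨g, by rw [h]; ring⟩
  rw [isSquare_mul_iff (mul_ne_zero hA hB) hC, isSquare_mul_iff hA hB] at hsq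
  tauto

set_option maxHeartbeats 3200000 in
/-- Master identity, case `p₀ = (1,t,t²)`, `e₀ ≠ 0`. -/
lemma master1 (t e0 e1 e2 rho x0 x1 x2 : K)
    (hrel : e1 ^ 2 - e0 * e2 = rho ^ 2) :
    e0 ^ 4 * (Fsc e0 e1 e2 x0 x1 x2
      * Fsc (2 * e0) (e1 + rho + t * e0) (2 * t * (e1 + rho)) x0 x1 x2
      * Fsc (2 * e0) (e1 - rho + t * e0) (2 * t * (e1 - rho)) x0 x1 x2)
    = (e0 ^ 2 * (4 * e0 * (t ^ 2 * x0 - 2 * t * x1 + x2)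
        * (x0 ^ 2 * e2 ^ 2 - 4 * x0 * x1 * e1 * e2 + 4 * x0 * x2 * e1 ^ 2 + 4 * e0 * x1 ^ 2 * e2
            - 4 * e0 * x1 * x2 * e1 + e0 ^ 2 * x2 ^ 2 - 2 * e0 * e2 * x0 * x2))) ^ 2 := by
  simp only [Fsc]
  linear_combination ((0 - 16*e0^4*e2^2*rho^2*x0^4*x2^2 + 64*e0^4*e1*e2*rho^2*x0^3*x1*x2^2 - 64*e0^4*e1^2*rho^2*x0^3*x2^3 + 16*e0^4*e1^2*e2^2*x0^4*x2^2 - 64*e0^4*e1^3*e2*x0^3*x1*x2^2 + 64*e0^4*e1^4*x0^3*x2^3 - 64*e0^5*e2*rho^2*x0^2*x1^2*x2^2 + 32*e0^5*e2*rho^2*x0^3*x2^3 + 16*e0^5*e2^3*x0^4*x2^2 + 64*e0^5*e1*rho^2*x0^2*x1*x2^3 - 128*e0^5*e1*e2^2*x0^3*x1*x2^2 + 320*e0^5*e1^2*e2*x0^2*x1^2*x2^2 + 32*e0^5*e1^2*e2*x0^3*x2^3 - 320*e0^5*e1^3*x0^2*x1*x2^3 - 16*e0^6*rho^2*x0^2*x2^4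 + 128*e0^6*e2^2*x0^2*x1^2*x2^2 - 64*e0^6*e2^2*x0^3*x2^3 - 512*e0^6*e1*e2*x0*x1^3*x2^2 + 192*e0^6*e1*e2*x0^2*x1*x2^3 + 512*e0^6*e1^2*x0*x1^2*x2^3 - 112*e0^6*e1^2*x0^2*x2^4 + 256*e0^7*e2*x1^4*x2^2 - 256*e0^7*e2*x0*x1^2*x2^3 + 80*e0^7*e2*x0^2*x2^4 - 256*e0^7*e1*x1^3*x2^3 + 64*e0^7*e1*x0*x1*x2^4 + 64*e0^8*x1^2*x2^4 - 32*e0^8*x0*x2^5 + 64*t*e0^4*e2^2*rho^2*x0^4*x1*x2 - 256*t*e0^4*e1*e2*rho^2*x0^3*x1^2*x2 + 256*t*e0^4*e1^2*rho^2*x0^3*x1*x2^2 - 64*t*e0^4*e1^2*e2^2*x0^4*x1*x2 + 256*t*e0^4*e1^3*e2*x0^3*x1^2*x2 - 256*t*e0^4*e1^4*x0^3*x1*x2^2 + 256*t*e0^5*e2*rho^2*x0^2*x1^3*x2 - 128*t*e0^5*e2*rho^2*x0^3*x1*x2^2 - 64*t*e0^5*e2^3*x0^4*x1*x2 - 256*t*e0^5*e1*rho^2*x0^2*x1^2*x2^2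 + 512*t*e0^5*e1*e2^2*x0^3*x1^2*x2 - 1280*t*e0^5*e1^2*e2*x0^2*x1^3*x2 - 128*t*e0^5*e1^2*e2*x0^3*x1*x2^2 + 1280*t*e0^5*e1^3*x0^2*x1^2*x2^2 + 64*t*e0^6*rho^2*x0^2*x1*x2^3 - 512*t*e0^6*e2^2*x0^2*x1^3*x2 + 256*t*e0^6*e2^2*x0^3*x1*x2^2 + 2048*t*e0^6*e1*e2*x0*x1^4*x2 - 768*t*e0^6*e1*e2*x0^2*x1^2*x2^2 - 2048*t*e0^6*e1^2*x0*x1^3*x2^2 + 448*t*e0^6*e1^2*x0^2*x1*x2^3 - 1024*t*e0^7*e2*x1^5*x2 + 1024*t*e0^7*e2*x0*x1^3*x2^2 - 320*t*e0^7*e2*x0^2*x1*x2^3 + 1024*t*e0^7*e1*x1^4*x2^2 - 256*t*e0^7*e1*x0*x1^2*x2^3 - 256*t*e0^8*x1^3*x2^3 + 128*t*e0^8*x0*x1*x2^4 - 64*t^2*e0^4*e2^2*rho^2*x0^4*x1^2 - 32*t^2*e0^4*e2^2*rho^2*x0^5*x2 + 256*t^2*e0^4*e1*e2*rho^2*x0^3*x1^3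 + 128*t^2*e0^4*e1*e2*rho^2*x0^4*x1*x2 - 256*t^2*e0^4*e1^2*rho^2*x0^3*x1^2*x2 - 128*t^2*e0^4*e1^2*rho^2*x0^4*x2^2 + 64*t^2*e0^4*e1^2*e2^2*x0^4*x1^2 + 32*t^2*e0^4*e1^2*e2^2*x0^5*x2 - 256*t^2*e0^4*e1^3*e2*x0^3*x1^3 - 128*t^2*e0^4*e1^3*e2*x0^4*x1*x2 + 256*t^2*e0^4*e1^4*x0^3*x1^2*x2 + 128*t^2*e0^4*e1^4*x0^4*x2^2 - 256*t^2*e0^5*e2*rho^2*x0^2*x1^4 + 64*t^2*e0^5*e2*rho^2*x0^4*x2^2 + 64*t^2*e0^5*e2^3*x0^4*x1^2 + 32*t^2*e0^5*e2^3*x0^5*x2 + 256*t^2*e0^5*e1*rho^2*x0^2*x1^3*x2 + 128*t^2*e0^5*e1*rho^2*x0^3*x1*x2^2 - 512*t^2*e0^5*e1*e2^2*x0^3*x1^3 - 256*t^2*e0^5*e1*e2^2*x0^4*x1*x2 + 1280*t^2*e0^5*e1^2*e2*x0^2*x1^4 + 768*t^2*e0^5*e1^2*e2*x0^3*x1^2*x2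 + 64*t^2*e0^5*e1^2*e2*x0^4*x2^2 - 1280*t^2*e0^5*e1^3*x0^2*x1^3*x2 - 640*t^2*e0^5*e1^3*x0^3*x1*x2^2 - 64*t^2*e0^6*rho^2*x0^2*x1^2*x2^2 - 32*t^2*e0^6*rho^2*x0^3*x2^3 + 512*t^2*e0^6*e2^2*x0^2*x1^4 - 128*t^2*e0^6*e2^2*x0^4*x2^2 - 2048*t^2*e0^6*e1*e2*x0*x1^5 - 256*t^2*e0^6*e1*e2*x0^2*x1^3*x2 + 384*t^2*e0^6*e1*e2*x0^3*x1*x2^2 + 2048*t^2*e0^6*e1^2*x0*x1^4*x2 + 576*t^2*e0^6*e1^2*x0^2*x1^2*x2^2 - 224*t^2*e0^6*e1^2*x0^3*x2^3 + 1024*t^2*e0^7*e2*x1^6 - 512*t^2*e0^7*e2*x0*x1^4*x2 - 192*t^2*e0^7*e2*x0^2*x1^2*x2^2 + 160*t^2*e0^7*e2*x0^3*x2^3 - 1024*t^2*e0^7*e1*x1^5*x2 - 256*t^2*e0^7*e1*x0*x1^3*x2^2 + 128*t^2*e0^7*e1*x0^2*x1*x2^3 + 256*t^2*e0^8*x1^4*x2^2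 - 64*t^2*e0^8*x0^2*x2^4 + 64*t^3*e0^4*e2^2*rho^2*x0^5*x1 - 256*t^3*e0^4*e1*e2*rho^2*x0^4*x1^2 + 256*t^3*e0^4*e1^2*rho^2*x0^4*x1*x2 - 64*t^3*e0^4*e1^2*e2^2*x0^5*x1 + 256*t^3*e0^4*e1^3*e2*x0^4*x1^2 - 256*t^3*e0^4*e1^4*x0^4*x1*x2 + 256*t^3*e0^5*e2*rho^2*x0^3*x1^3 - 128*t^3*e0^5*e2*rho^2*x0^4*x1*x2 - 64*t^3*e0^5*e2^3*x0^5*x1 - 256*t^3*e0^5*e1*rho^2*x0^3*x1^2*x2 + 512*t^3*e0^5*e1*e2^2*x0^4*x1^2 - 1280*t^3*e0^5*e1^2*e2*x0^3*x1^3 - 128*t^3*e0^5*e1^2*e2*x0^4*x1*x2 + 1280*t^3*e0^5*e1^3*x0^3*x1^2*x2 + 64*t^3*e0^6*rho^2*x0^3*x1*x2^2 - 512*t^3*e0^6*e2^2*x0^3*x1^3 + 256*t^3*e0^6*e2^2*x0^4*x1*x2 + 2048*t^3*e0^6*e1*e2*x0^2*x1^4 - 768*t^3*e0^6*e1*e2*x0^3*x1^2*x2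 - 2048*t^3*e0^6*e1^2*x0^2*x1^3*x2 + 448*t^3*e0^6*e1^2*x0^3*x1*x2^2 - 1024*t^3*e0^7*e2*x0*x1^5 + 1024*t^3*e0^7*e2*x0^2*x1^3*x2 - 320*t^3*e0^7*e2*x0^3*x1*x2^2 + 1024*t^3*e0^7*e1*x0*x1^4*x2 - 256*t^3*e0^7*e1*x0^2*x1^2*x2^2 - 256*t^3*e0^8*x0*x1^3*x2^2 + 128*t^3*e0^8*x0^2*x1*x2^3 - 16*t^4*e0^4*e2^2*rho^2*x0^6 + 64*t^4*e0^4*e1*e2*rho^2*x0^5*x1 - 64*t^4*e0^4*e1^2*rho^2*x0^5*x2 + 16*t^4*e0^4*e1^2*e2^2*x0^6 - 64*t^4*e0^4*e1^3*e2*x0^5*x1 + 64*t^4*e0^4*e1^4*x0^5*x2 - 64*t^4*e0^5*e2*rho^2*x0^4*x1^2 + 32*t^4*e0^5*e2*rho^2*x0^5*x2 + 16*t^4*e0^5*e2^3*x0^6 + 64*t^4*e0^5*e1*rho^2*x0^4*x1*x2 - 128*t^4*e0^5*e1*e2^2*x0^5*x1 + 320*t^4*e0^5*e1^2*e2*x0^4*x1^2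 + 32*t^4*e0^5*e1^2*e2*x0^5*x2 - 320*t^4*e0^5*e1^3*x0^4*x1*x2 - 16*t^4*e0^6*rho^2*x0^4*x2^2 + 128*t^4*e0^6*e2^2*x0^4*x1^2 - 64*t^4*e0^6*e2^2*x0^5*x2 - 512*t^4*e0^6*e1*e2*x0^3*x1^3 + 192*t^4*e0^6*e1*e2*x0^4*x1*x2 + 512*t^4*e0^6*e1^2*x0^3*x1^2*x2 - 112*t^4*e0^6*e1^2*x0^4*x2^2 + 256*t^4*e0^7*e2*x0^2*x1^4 - 256*t^4*e0^7*e2*x0^3*x1^2*x2 + 80*t^4*e0^7*e2*x0^4*x2^2 - 256*t^4*e0^7*e1*x0^2*x1^3*x2 + 64*t^4*e0^7*e1*x0^3*x1*x2^2 + 64*t^4*e0^8*x0^2*x1^2*x2^2 - 32*t^4*e0^8*x0^3*x2^3)) * hrel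

/-- Master identity, case `p₀ = (1,t,t²)`, `e₀ = 0`. -/
lemma master2 (t e1 e2 x0 x1 x2 : K) :
    Fsc 0 e1 e2 x0 x1 x2
      * Fsc (4 * e1) (e2 + 2 * t * e1) (2 * t * e2) x0 x1 x2
      * Fsc 0 1 (2 * t) x0 x1 x2
    = (4 * x0 * (t ^ 2 * x0 - 2 * t * x1 + x2)
        * (e2 ^ 2 * x0 - 4 * e1 * e2 * x1 + 4 * e1 ^ 2 * x2)) ^ 2 := by
  simp only [Fsc]
  ring

set_option maxHeartbeats 3200000 in
/-- Master identity, case `p₀ = (0,0,1)`. -/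
lemma master3 (e0 e1 e2 rho x0 x1 x2 : K)
    (hrel : e1 ^ 2 - e0 * e2 = rho ^ 2) :
    e0 ^ 4 * (Fsc e0 e1 e2 x0 x1 x2
      * Fsc 0 e0 (2 * (e1 + rho)) x0 x1 x2
      * Fsc 0 e0 (2 * (e1 - rho)) x0 x1 x2)
    = (e0 ^ 2 * (4 * x0 * e0
        * (x0 ^ 2 * e2 ^ 2 - 4 * x0 * x1 * e1 * e2 + 4 * x0 * x2 * e1 ^ 2 + 4 * e0 * x1 ^ 2 * e2
            - 4 * e0 * x1 * x2 * e1 + e0 ^ 2 * x2 ^ 2 - 2 * e0 * e2 * x0 * x2))) ^ 2 := by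
  simp only [Fsc]
  linear_combination ((0 - 16*e0^4*e2^2*rho^2*x0^6 + 64*e0^4*e1*e2*rho^2*x0^5*x1 - 64*e0^4*e1^2*rho^2*x0^5*x2 + 16*e0^4*e1^2*e2^2*x0^6 - 64*e0^4*e1^3*e2*x0^5*x1 + 64*e0^4*e1^4*x0^5*x2 - 64*e0^5*e2*rho^2*x0^4*x1^2 + 32*e0^5*e2*rho^2*x0^5*x2 + 16*e0^5*e2^3*x0^6 + 64*e0^5*e1*rho^2*x0^4*x1*x2 - 128*e0^5*e1*e2^2*x0^5*x1 + 320*e0^5*e1^2*e2*x0^4*x1^2 + 32*e0^5*e1^2*e2*x0^5*x2 - 320*e0^5*e1^3*x0^4*x1*x2 - 16*e0^6*rho^2*x0^4*x2^2 + 128*e0^6*e2^2*x0^4*x1^2 - 64*e0^6*e2^2*x0^5*x2 - 512*e0^6*e1*e2*x0^3*x1^3 + 192*e0^6*e1*e2*x0^4*x1*x2 + 512*e0^6*e1^2*x0^3*x1^2*x2 - 112*e0^6*e1^2*x0^4*x2^2 + 256*e0^7*e2*x0^2*x1^4 - 256*e0^7*e2*x0^3*x1^2*x2 + 80*e0^7*e2*x0^4*x2^2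 - 256*e0^7*e1*x0^2*x1^3*x2 + 64*e0^7*e1*x0^3*x1*x2^2 + 64*e0^8*x0^2*x1^2*x2^2 - 32*e0^8*x0^3*x2^3)) * hrel

end Master


/-! ### Parity bookkeeping and the off-line case -/

section Parity

variable {K : Type*} [Field K] [Fintype K]

lemma sum_ite_parity (M : Finset (Pt K)) (P : Pt K → Prop) [DecidablePred P] :
    (∑ x ∈ M, if P x then (1 : ZMod 2) else 0) = ((M.filter P).card : ZMod 2) := by
  rw [← Finset.sum_filter, Finset.sum_const, nsmul_eq_mul, mul_one]

lemma odd_card_cast {n : ℕ} (h : Odd n) : ((n : ZMod 2)) = 1 := by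
  obtain ⟨k, rfl⟩ := h
  push_cast
  rw [show (2 : ZMod 2) = 0 by decide]
  ring

lemma zmod2_ite {a b c : Prop} (h : a ↔ (b ↔ c)) :
    (if ¬a then (1 : ZMod 2) else 0) = (if ¬b then 1 else 0) + (if ¬c then 1 else 0) := by
  by_cases hb : b <;> by_cases hc : c
  · rw [if_neg (not_not_intro (h.mpr (iff_of_true hb hc))),
        if_neg (not_not_intro hb), if_neg (not_not_intro hc)]
    decide
  · have ha : a ↔ False := by
      rw [h]
      constructor
      · intro h'
        exact hc (h'.mp hb)
      · intro h'
        exact h'.elim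
    rw [if_pos (fun h' => (ha.mp h')), if_neg (not_not_intro hb), if_pos hc]
    decide
  · have ha : a ↔ False := by
      rw [h]
      constructor
      · intro h'
        exact hb (h'.mpr hc)
      · intro h'
        exact h'.elim
    rw [if_pos (fun h' => (ha.mp h')), if_pos hb, if_neg (not_not_intro hc)]
    decide
  · rw [if_neg (not_not_intro (h.mpr (iff_of_false hb hc))), if_pos hb, if_pos hc]
    decide

lemma isSquare_triple_iff' {A B C S d : K} (hA : A ≠ 0) (hB : B ≠ 0) (hC : C ≠ 0) (hd : d ≠ 0)
    (h : d ^ 2 * (A * B * C) = S ^ 2) : (IsSquare A ↔ (IsSquare B ↔ IsSquare C)) := by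
  have h1 : IsSquare (d ^ 2 * (A * B * C)) := ⟨S, by rw [h]; ring⟩
  rw [isSquare_sq_mul_iff hd] at h1
  rw [isSquare_mul_iff (mul_ne_zero hA hB) hC, isSquare_mul_iff hA hB] at h1
  tauto

/-- The common endgame for an external point off the tangent line. -/
lemma offline_case (h2 : (2 : K) ≠ 0) {l e : Pt K} {M : Finset (Pt K)}
    (hMint : ∀ x ∈ M, Internal x)
    (hM : ∀ q0 : Pt K, External q0 → Incid q0 l →
      Odd (M.filter (fun x => Passant (lineThrough q0 x))).card)
    (he : External e)
    (hxl : ∀ x ∈ M, ¬ Incid x l)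
    {w1v w2v : Fin 3 → K} (hw1 : w1v ≠ 0) (hw2 : w2v ≠ 0)
    (hW1ext : External (Projectivization.mk K w1v hw1))
    (hW2ext : External (Projectivization.mk K w2v hw2))
    (hW1l : Incid (Projectivization.mk K w1v hw1) l)
    (hW2l : Incid (Projectivization.mk K w2v hw2) l)
    (hsq : ∀ x ∈ M, ∃ d S : K, d ≠ 0 ∧
      d ^ 2 * (Fpv e.rep x.rep * Fpv w1v x.rep * Fpv w2v x.rep) = S ^ 2) :
    (0 : ZMod 2) = ∑ x ∈ M,
      if ∃ l', Passant l' ∧ Incid x l' ∧ Incid e l' then (1 : ZMod 2) else 0 := by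
  set W1 := Projectivization.mk K w1v hw1 with hW1def
  set W2 := Projectivization.mk K w2v hw2 with hW2def
  have key : ∀ x ∈ M,
      (if ∃ l', Passant l' ∧ Incid x l' ∧ Incid e l' then (1 : ZMod 2) else 0)
        = (if Passant (lineThrough W1 x) then 1 else 0)
          + (if Passant (lineThrough W2 x) then 1 else 0) := by
    intro x hx
    have hxint := hMint x hx
    have hneE : e ≠ x := ne_of_external_internal he hxint
    have hne1 : W1 ≠ x := fun h => (hxl x hx) (h ▸ hW1l)
    have hne2 : W2 ≠ x := fun h => (hxl x hx) (h ▸ hW2l)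
    have hA : Fpv e.rep x.rep ≠ 0 := Fpv_ne_zero_of_internal h2 hxint hneE
    obtain ⟨a1, ha1, hF1⟩ := Fpv_rep_mk w1v hw1 x
    obtain ⟨a2, ha2, hF2⟩ := Fpv_rep_mk w2v hw2 x
    have hB0 : Fpv W1.rep x.rep ≠ 0 := Fpv_ne_zero_of_internal h2 hxint hne1
    have hC0 : Fpv W2.rep x.rep ≠ 0 := Fpv_ne_zero_of_internal h2 hxint hne2
    have hB : Fpv w1v x.rep ≠ 0 := fun h => hB0 (by rw [hW1def, hF1, h, mul_zero])
    have hC : Fpv w2v x.rep ≠ 0 := fun h => hC0 (by rw [hW2def, hF2, h, mul_zero])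
    obtain ⟨d, S, hd, hds⟩ := hsq x hx
    have hiff := isSquare_triple_iff' hA hB hC hd hds
    have hBiff : IsSquare (Fpv W1.rep x.rep) ↔ IsSquare (Fpv w1v x.rep) := by
      rw [hW1def, hF1, isSquare_sq_mul_iff ha1]
    have hCiff : IsSquare (Fpv W2.rep x.rep) ↔ IsSquare (Fpv w2v x.rep) := by
      rw [hW2def, hF2, isSquare_sq_mul_iff ha2]
    have PA : (∃ l', Passant l' ∧ Incid x l' ∧ Incid e l')
        ↔ ¬ IsSquare (Fpv e.rep x.rep) :=
      (exists_passant_iff hneE).trans (passant_lineThrough_iff h2 hneE)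
    have PB : Passant (lineThrough W1 x) ↔ ¬ IsSquare (Fpv w1v x.rep) :=
      (passant_lineThrough_iff h2 hne1).trans (not_congr hBiff)
    have PC : Passant (lineThrough W2 x) ↔ ¬ IsSquare (Fpv w2v x.rep) :=
      (passant_lineThrough_iff h2 hne2).trans (not_congr hCiff)
    rw [if_congr PA rfl rfl, if_congr PB rfl rfl, if_congr PC rfl rfl]
    convert zmod2_ite hiff using 2 <;> congr!
  rw [Finset.sum_congr rfl key, Finset.sum_add_distrib, sum_ite_parity, sum_ite_parity,
      odd_card_cast (hM W1 hW1ext hW1l), odd_card_cast (hM W2 hW2ext hW2l)]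
  decide

end Parity

/-- for `q ≡ 1 (mod 4)`, `ℓ = p0⊥` a tangent line with point of
tangency `p0 ∈ O`, and `M` a finite odd set of internal points such that each
external point of `ℓ` is joined to an odd number of points of `M` by passant
lines, the characteristic vector of `E_ℓ` over `F_2` equals
`Σ_{p ∈ M} χ_{N_{Pa,E}(p)}`. -/
theorem chi_tangent_eq_sum_NPaE
    (K : Type*) [Field K] [Fintype K] (hodd : Odd (Fintype.card K))
    (h1 : Fintype.card K % 4 = 1)
    (p0 l : Pt K) (hp0 : OnConic p0) (hl : l = perp p0) (hlt : Tangent l)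
    (M : Finset (Pt K)) (hMint : ∀ x ∈ M, Internal x) (hModd : Odd M.card)
    (hM : ∀ q0 : Pt K, External q0 → Incid q0 l →
      Odd (M.filter (fun x => Passant (lineThrough q0 x))).card) :
    ∀ e : Pt K, External e →
      (if Incid e l then (1 : ZMod 2) else 0) =
        ∑ x ∈ M,
          if ∃ l', Passant l' ∧ Incid x l' ∧ Incid e l' then (1 : ZMod 2) else 0 := by
  have h2 : (2 : K) ≠ 0 := by
    intro h20
    have hdvd : ringChar K ∣ 2 := (ringChar.spec K 2).mp (by exact_mod_cast h20)
    rcases (Nat.dvd_prime Nat.prime_two).mp hdvd with hc | hc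
    · exact CharP.ringChar_ne_one hc
    · have heven := (FiniteField.even_card_iff_char_two).mp hc
      rw [Nat.odd_iff] at hodd
      omega
  intro e he
  have hxl : ∀ x ∈ M, ¬ Incid x l := fun x hx hxi =>
    internal_not_incid_tangent (hMint x hx) hlt hxi
  by_cases hel : Incid e l
  · rw [if_pos hel]
    have key : ∀ x ∈ M,
        (if ∃ l', Passant l' ∧ Incid x l' ∧ Incid e l' then (1 : ZMod 2) else 0)
          = if Passant (lineThrough e x) then 1 else 0 := by
      intro x hx
      exact if_congr (exists_passant_iff (ne_of_external_internal he (hMint x hx))) rfl rfl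
    rw [Finset.sum_congr rfl key, sum_ite_parity, odd_card_cast (hM e he hel)]
  · rw [if_neg hel]
    obtain ⟨hesq, heQ⟩ := (external_iff h2 e).mp he
    obtain ⟨rho, hrho⟩ := hesq
    have hrel : e.rep 1 ^ 2 - e.rep 0 * e.rep 2 = rho ^ 2 := by
      have h' : Qf e.rep = rho ^ 2 := by rw [hrho]; ring
      exact h'
    rcases (onConic_iff p0).mp hp0 with ⟨tp, hpt⟩ | hpt
    · -- p0 is an affine conic point (1, t, t²)
      have hIncid : ∀ u : Pt K, Incid u l ↔
          tp ^ 2 * u.rep 0 - 2 * tp * u.rep 1 + u.rep 2 = 0 := by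
        intro u
        rw [hl, hpt]
        exact incid_perp_mkc h2 tp u
      have hLte : tp ^ 2 * e.rep 0 - 2 * tp * e.rep 1 + e.rep 2 ≠ 0 :=
        fun h => hel ((hIncid e).mpr h)
      by_cases he0 : e.rep 0 = 0
      · -- CASE 2 : e on the line at infinity
        have he1 : e.rep 1 ≠ 0 := by
          intro h
          apply heQ
          show e.rep 1 ^ 2 - e.rep 0 * e.rep 2 = 0
          rw [h, he0]; ring
        have h4e1 : (4 : K) * e.rep 1 ≠ 0 := by
          refine mul_ne_zero ?_ he1
          rw [show (4 : K) = 2 * 2 by norm_num]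
          exact mul_ne_zero h2 h2
        set w1v : Fin 3 → K :=
          ![4 * e.rep 1, e.rep 2 + 2 * tp * e.rep 1, 2 * tp * e.rep 2] with hw1v
        set w2v : Fin 3 → K := ![0, 1, 2 * tp] with hw2v
        have hw1 : w1v ≠ 0 := fun h => h4e1 (congrFun h 0)
        have hw2 : w2v ≠ 0 := fun h => one_ne_zero (congrFun h 1)
        have hz1 : e.rep 2 - 2 * tp * e.rep 1 ≠ 0 := by
          intro h
          apply hLte
          rw [he0]
          linear_combination h
        have hQ1 : Qf w1v = (e.rep 2 - 2 * tp * e.rep 1) ^ 2 := by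
          rw [hw1v, Qf_vec]; ring
        have hQ2 : Qf w2v = 1 := by
          rw [hw2v, Qf_vec]; ring
        have hW1ext : External (Projectivization.mk K w1v hw1) := by
          rw [external_mk_iff h2, hQ1]
          exact ⟨⟨e.rep 2 - 2 * tp * e.rep 1, by ring⟩, pow_ne_zero 2 hz1⟩
        have hW2ext : External (Projectivization.mk K w2v hw2) := by
          rw [external_mk_iff h2, hQ2]
          exact ⟨IsSquare.one, one_ne_zero⟩
        have hW1l : Incid (Projectivization.mk K w1v hw1) l := by
          rw [hIncid]
          obtain ⟨a, ha, hrep⟩ := rep_mk' w1v hw1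
          rw [hrep, hw1v]
          show tp ^ 2 * (a * (4 * e.rep 1)) - 2 * tp * (a * (e.rep 2 + 2 * tp * e.rep 1))
            + a * (2 * tp * e.rep 2) = 0
          ring
        have hW2l : Incid (Projectivization.mk K w2v hw2) l := by
          rw [hIncid]
          obtain ⟨a, ha, hrep⟩ := rep_mk' w2v hw2
          rw [hrep, hw2v]
          show tp ^ 2 * (a * 0) - 2 * tp * (a * 1) + a * (2 * tp) = 0
          ring
        have hsq : ∀ x ∈ M, ∃ d S : K, d ≠ 0 ∧
            d ^ 2 * (Fpv e.rep x.rep * Fpv w1v x.rep * Fpv w2v x.rep) = S ^ 2 := by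
          intro x hx
          refine ⟨1, 4 * x.rep 0 * (tp ^ 2 * x.rep 0 - 2 * tp * x.rep 1 + x.rep 2)
            * (e.rep 2 ^ 2 * x.rep 0 - 4 * e.rep 1 * e.rep 2 * x.rep 1
                + 4 * e.rep 1 ^ 2 * x.rep 2), one_ne_zero, ?_⟩
          have hm := master2 tp (e.rep 1) (e.rep 2) (x.rep 0) (x.rep 1) (x.rep 2)
          have r1 : Fpv e.rep x.rep
              = Fsc 0 (e.rep 1) (e.rep 2) (x.rep 0) (x.rep 1) (x.rep 2) := by
            rw [show Fpv e.rep x.rep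
              = Fsc (e.rep 0) (e.rep 1) (e.rep 2) (x.rep 0) (x.rep 1) (x.rep 2) from rfl, he0]
          have r2 : Fpv w1v x.rep
              = Fsc (4 * e.rep 1) (e.rep 2 + 2 * tp * e.rep 1) (2 * tp * e.rep 2)
                  (x.rep 0) (x.rep 1) (x.rep 2) := by
            rw [hw1v]; exact Fpv_vec _ _ _ _
          have r3 : Fpv w2v x.rep
              = Fsc 0 1 (2 * tp) (x.rep 0) (x.rep 1) (x.rep 2) := by
            rw [hw2v]; exact Fpv_vec _ _ _ _
          rw [r1, r2, r3]
          linear_combination hm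
        exact offline_case h2 hMint hM he hxl hw1 hw2 hW1ext hW2ext hW1l hW2l hsq
      · -- CASE 1 : generic position
        have h2e0 : (2 : K) * e.rep 0 ≠ 0 := mul_ne_zero h2 he0
        set w1v : Fin 3 → K :=
          ![2 * e.rep 0, e.rep 1 + rho + tp * e.rep 0, 2 * tp * (e.rep 1 + rho)] with hw1v
        set w2v : Fin 3 → K :=
          ![2 * e.rep 0, e.rep 1 - rho + tp * e.rep 0, 2 * tp * (e.rep 1 - rho)] with hw2v
        have hw1 : w1v ≠ 0 := fun h => h2e0 (congrFun h 0)
        have hw2 : w2v ≠ 0 := fun h => h2e0 (congrFun h 0)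
        have hz1 : e.rep 1 + rho - tp * e.rep 0 ≠ 0 := by
          intro hz
          apply hLte
          have h0 : e.rep 0 * (tp ^ 2 * e.rep 0 - 2 * tp * e.rep 1 + e.rep 2) = 0 := by
            linear_combination (-(tp * e.rep 0 - e.rep 1 + rho)) * hz - hrel
          exact (mul_eq_zero.mp h0).resolve_left he0
        have hz2 : e.rep 1 - rho - tp * e.rep 0 ≠ 0 := by
          intro hz
          apply hLte
          have h0 : e.rep 0 * (tp ^ 2 * e.rep 0 - 2 * tp * e.rep 1 + e.rep 2) = 0 := by
            linear_combination (-(tp * e.rep 0 - e.rep 1 - rho)) * hz - hrel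
          exact (mul_eq_zero.mp h0).resolve_left he0
        have hQ1 : Qf w1v = (e.rep 1 + rho - tp * e.rep 0) ^ 2 := by
          rw [hw1v, Qf_vec]; ring
        have hQ2 : Qf w2v = (e.rep 1 - rho - tp * e.rep 0) ^ 2 := by
          rw [hw2v, Qf_vec]; ring
        have hW1ext : External (Projectivization.mk K w1v hw1) := by
          rw [external_mk_iff h2, hQ1]
          exact ⟨⟨e.rep 1 + rho - tp * e.rep 0, by ring⟩, pow_ne_zero 2 hz1⟩
        have hW2ext : External (Projectivization.mk K w2v hw2) := by
          rw [external_mk_iff h2, hQ2]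
          exact ⟨⟨e.rep 1 - rho - tp * e.rep 0, by ring⟩, pow_ne_zero 2 hz2⟩
        have hW1l : Incid (Projectivization.mk K w1v hw1) l := by
          rw [hIncid]
          obtain ⟨a, ha, hrep⟩ := rep_mk' w1v hw1
          rw [hrep, hw1v]
          show tp ^ 2 * (a * (2 * e.rep 0))
            - 2 * tp * (a * (e.rep 1 + rho + tp * e.rep 0))
            + a * (2 * tp * (e.rep 1 + rho)) = 0
          ring
        have hW2l : Incid (Projectivization.mk K w2v hw2) l := by
          rw [hIncid]
          obtain ⟨a, ha, hrep⟩ := rep_mk' w2v hw2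
          rw [hrep, hw2v]
          show tp ^ 2 * (a * (2 * e.rep 0))
            - 2 * tp * (a * (e.rep 1 - rho + tp * e.rep 0))
            + a * (2 * tp * (e.rep 1 - rho)) = 0
          ring
        have hsq : ∀ x ∈ M, ∃ d S : K, d ≠ 0 ∧
            d ^ 2 * (Fpv e.rep x.rep * Fpv w1v x.rep * Fpv w2v x.rep) = S ^ 2 := by
          intro x hx
          refine ⟨e.rep 0 ^ 2,
            e.rep 0 ^ 2 * (4 * e.rep 0 * (tp ^ 2 * x.rep 0 - 2 * tp * x.rep 1 + x.rep 2)
              * (x.rep 0 ^ 2 * e.rep 2 ^ 2 - 4 * x.rep 0 * x.rep 1 * e.rep 1 * e.rep 2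
                  + 4 * x.rep 0 * x.rep 2 * e.rep 1 ^ 2 + 4 * e.rep 0 * x.rep 1 ^ 2 * e.rep 2
                  - 4 * e.rep 0 * x.rep 1 * x.rep 2 * e.rep 1 + e.rep 0 ^ 2 * x.rep 2 ^ 2
                  - 2 * e.rep 0 * e.rep 2 * x.rep 0 * x.rep 2)),
            pow_ne_zero 2 he0, ?_⟩
          have hm := master1 tp (e.rep 0) (e.rep 1) (e.rep 2) rho
            (x.rep 0) (x.rep 1) (x.rep 2) hrel
          have r1 : Fpv e.rep x.rep
              = Fsc (e.rep 0) (e.rep 1) (e.rep 2) (x.rep 0) (x.rep 1) (x.rep 2) := rfl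
          have r2 : Fpv w1v x.rep
              = Fsc (2 * e.rep 0) (e.rep 1 + rho + tp * e.rep 0) (2 * tp * (e.rep 1 + rho))
                  (x.rep 0) (x.rep 1) (x.rep 2) := by
            rw [hw1v]; exact Fpv_vec _ _ _ _
          have r3 : Fpv w2v x.rep
              = Fsc (2 * e.rep 0) (e.rep 1 - rho + tp * e.rep 0) (2 * tp * (e.rep 1 - rho))
                  (x.rep 0) (x.rep 1) (x.rep 2) := by
            rw [hw2v]; exact Fpv_vec _ _ _ _
          rw [r1, r2, r3]
          linear_combination hm
        exact offline_case h2 hMint hM he hxl hw1 hw2 hW1ext hW2ext hW1l hW2l hsq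
    · -- p0 = (0,0,1)
      have hIncid : ∀ u : Pt K, Incid u l ↔ u.rep 0 = 0 := by
        intro u
        rw [hl, hpt]
        exact incid_perp_mkinf h2 u
      have he0 : e.rep 0 ≠ 0 := fun h => hel ((hIncid e).mpr h)
      set w1v : Fin 3 → K := ![0, e.rep 0, 2 * (e.rep 1 + rho)] with hw1v
      set w2v : Fin 3 → K := ![0, e.rep 0, 2 * (e.rep 1 - rho)] with hw2v
      have hw1 : w1v ≠ 0 := fun h => he0 (congrFun h 1)
      have hw2 : w2v ≠ 0 := fun h => he0 (congrFun h 1)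
      have hQ1 : Qf w1v = e.rep 0 ^ 2 := by
        rw [hw1v, Qf_vec]; ring
      have hQ2 : Qf w2v = e.rep 0 ^ 2 := by
        rw [hw2v, Qf_vec]; ring
      have hW1ext : External (Projectivization.mk K w1v hw1) := by
        rw [external_mk_iff h2, hQ1]
        exact ⟨⟨e.rep 0, by ring⟩, pow_ne_zero 2 he0⟩
      have hW2ext : External (Projectivization.mk K w2v hw2) := by
        rw [external_mk_iff h2, hQ2]
        exact ⟨⟨e.rep 0, by ring⟩, pow_ne_zero 2 he0⟩
      have hW1l : Incid (Projectivization.mk K w1v hw1) l := by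
        rw [hIncid]
        obtain ⟨a, ha, hrep⟩ := rep_mk' w1v hw1
        rw [hrep, hw1v]
        show a * 0 = 0
        ring
      have hW2l : Incid (Projectivization.mk K w2v hw2) l := by
        rw [hIncid]
        obtain ⟨a, ha, hrep⟩ := rep_mk' w2v hw2
        rw [hrep, hw2v]
        show a * 0 = 0
        ring
      have hsq : ∀ x ∈ M, ∃ d S : K, d ≠ 0 ∧
          d ^ 2 * (Fpv e.rep x.rep * Fpv w1v x.rep * Fpv w2v x.rep) = S ^ 2 := by
        intro x hx
        refine ⟨e.rep 0 ^ 2,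
          e.rep 0 ^ 2 * (4 * x.rep 0 * e.rep 0
            * (x.rep 0 ^ 2 * e.rep 2 ^ 2 - 4 * x.rep 0 * x.rep 1 * e.rep 1 * e.rep 2
                + 4 * x.rep 0 * x.rep 2 * e.rep 1 ^ 2 + 4 * e.rep 0 * x.rep 1 ^ 2 * e.rep 2
                - 4 * e.rep 0 * x.rep 1 * x.rep 2 * e.rep 1 + e.rep 0 ^ 2 * x.rep 2 ^ 2
                - 2 * e.rep 0 * e.rep 2 * x.rep 0 * x.rep 2)),
          pow_ne_zero 2 he0, ?_⟩
        have hm := master3 (e.rep 0) (e.rep 1) (e.rep 2) rho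
          (x.rep 0) (x.rep 1) (x.rep 2) hrel
        have r1 : Fpv e.rep x.rep
            = Fsc (e.rep 0) (e.rep 1) (e.rep 2) (x.rep 0) (x.rep 1) (x.rep 2) := rfl
        have r2 : Fpv w1v x.rep
            = Fsc 0 (e.rep 0) (2 * (e.rep 1 + rho)) (x.rep 0) (x.rep 1) (x.rep 2) := by
          rw [hw1v]; exact Fpv_vec _ _ _ _
        have r3 : Fpv w2v x.rep
            = Fsc 0 (e.rep 0) (2 * (e.rep 1 - rho)) (x.rep 0) (x.rep 1) (x.rep 2) := by
          rw [hw2v]; exact Fpv_vec _ _ _ _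
        rw [r1, r2, r3]
        linear_combination hm
      exact offline_case h2 hMint hM he hxl hw1 hw2 hW1ext hW2ext hW1l hW2l hsq

end ConicCode
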